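/- The magnitude function of a finite subset of Euclidean space is real analytic on (0, ∞); in particular, for every t > 0 the scaled similarity matrix ζ_{tX}(i,j) = exp(-t‖x_i - x_j‖) is invertible, and t ↦ Mag(tX) is continuous (indeed smooth) on (0, ∞). -/

import Mathlib

/-!
For `t > 0` the similarity matrix `ζ_{tX}` is positive definite because the Laplace kernel is a
mixture of Gaussian kernels,
`exp (-r) = 2 / √π * ∫ s in (0, ∞), exp (-s ^ 2) * exp (-(r ^ 2 / (4 * s ^ 2)))`,
and Gaussian kernel matrices `exp (-a ‖xᵢ - xⱼ‖²)` are positive semidefinite: up to a diagonal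
congruence they are the entrywise exponential of the Gram matrix `2a ⟨xᵢ, xⱼ⟩`, a limit of
nonnegative combinations of its Hadamard powers (Schur product theorem). Strictness comes from
the Gaussian matrices tending to the identity as `a → ∞`. Hence `det ζ_{tX} ≠ 0`, and
`Mag (tX) = 𝟙ᵀ ζ_{tX}⁻¹ 𝟙` is analytic, since `ζ_{tX}⁻¹ = adj ζ_{tX} / det ζ_{tX}` has entries that
are rational expressions in the analytic functions `t ↦ exp (-t ‖xᵢ - xⱼ‖)`.
-/

open Matrix Real

open MeasureTheory Set Filter Topology

namespace Matrix

variable {ι : Type*} [Fintype ι]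

theorem PosSemidef.map_pow {A : Matrix ι ι ℝ} (hA : A.PosSemidef) (k : ℕ) :
    (A.map (· ^ k)).PosSemidef := by
  induction k with
  | zero =>
    convert posSemidef_vecMulVec_self_star (fun _ : ι => (1 : ℝ)) using 1
    ext; simp [vecMulVec]
  | succ k ih =>
    have h : A.map (· ^ (k + 1)) = A.map (· ^ k) ⊙ A := by ext; simp [pow_succ]
    exact h ▸ ih.hadamard hA

theorem PosSemidef.map_exp {A : Matrix ι ι ℝ} (hA : A.PosSemidef) :
    (A.map exp).PosSemidef := by
  have hsum : HasSum (fun k : ℕ => (k.factorial : ℝ)⁻¹ • A.map (· ^ k)) (A.map exp) := by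
    refine Pi.hasSum.mpr fun i => Pi.hasSum.mpr fun j => ?_
    simpa [exp_eq_exp_ℝ, div_eq_inv_mul] using NormedSpace.expSeries_div_hasSum_exp (A i j)
  refine .of_dotProduct_mulVec_nonneg (hA.isHermitian.map exp fun _ => rfl) fun v => ?_
  have hq := hsum.map (AddMonoidHom.mk' (fun M : Matrix ι ι ℝ => star v ⬝ᵥ M *ᵥ v)
    (by simp [add_mulVec]))
    (continuous_const.dotProduct (continuous_id.matrix_mulVec continuous_const))
  exact hq.nonneg fun k => ((hA.map_pow k).smul (by positivity)).dotProduct_mulVec_nonneg v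

variable {α 𝕜 : Type*} [MeasurableSpace α] {μ : Measure α} [RCLike 𝕜] {F : α → Matrix ι ι 𝕜}

theorem integrable_dotProduct_mulVec (hF : ∀ i j, Integrable (fun a => F a i j) μ) (v w : ι → 𝕜) :
    Integrable (fun a => v ⬝ᵥ F a *ᵥ w) μ := by
  simp only [dotProduct, mulVec, Finset.mul_sum]
  exact integrable_finsetSum _ fun i _ => integrable_finsetSum _ fun j _ =>
    ((hF i j).mul_const _).const_mul _

theorem dotProduct_mulVec_integral (hF : ∀ i j, Integrable (fun a => F a i j) μ) (v w : ι → 𝕜) :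
    v ⬝ᵥ of (fun i j => ∫ a, F a i j ∂μ) *ᵥ w = ∫ a, v ⬝ᵥ F a *ᵥ w ∂μ := by
  simp only [dotProduct, mulVec, of_apply, Finset.mul_sum]
  rw [integral_finsetSum _ fun i _ => integrable_finsetSum _ fun j _ =>
    ((hF i j).mul_const _).const_mul _]
  refine Finset.sum_congr rfl fun i _ => ?_
  rw [integral_finsetSum _ fun j _ => ((hF i j).mul_const _).const_mul _]
  exact Finset.sum_congr rfl fun j _ => by rw [integral_const_mul, integral_mul_const]

end Matrix

theorem setIntegral_pos_of_continuousOn {X : Type*} [TopologicalSpace X] [MeasurableSpace X]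
    [OpensMeasurableSpace X] {μ : Measure X} [μ.IsOpenPosMeasure] {s : Set X} {f : X → ℝ}
    (hs : IsOpen s) (hf : ContinuousOn f s) (hfi : IntegrableOn f s μ) (h0 : ∀ x ∈ s, 0 ≤ f x)
    {x : X} (hx : x ∈ s) (hfx : f x ≠ 0) : 0 < ∫ x in s, f x ∂μ := by
  rw [setIntegral_pos_iff_support_of_nonneg_ae ((ae_restrict_mem hs.measurableSet).mono h0) hfi,
    inter_comm]
  exact (hf.isOpen_inter_preimage hs isOpen_compl_singleton).measure_pos μ ⟨x, hx, hfx⟩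

section GaussianKernel

variable {ι E : Type*}

noncomputable def gaussianKernelMatrix [SeminormedAddCommGroup E] (y : ι → E) (a : ℝ) :
    Matrix ι ι ℝ :=
  of fun i j => exp (-(a * ‖y i - y j‖ ^ 2))

theorem posSemidef_gaussianKernelMatrix [Fintype ι] [NormedAddCommGroup E]
    [InnerProductSpace ℝ E] (y : ι → E) {a : ℝ} (ha : 0 ≤ a) :
    (gaussianKernelMatrix y a).PosSemidef := by
  classical
  let d : ι → ℝ := fun i => exp (-(a * ‖y i‖ ^ 2))
  have h : gaussianKernelMatrix y a =
      diagonal d * ((2 * a) • gram ℝ y).map exp * (diagonal d)ᴴ := by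
    ext i j
    simp only [gaussianKernelMatrix, of_apply, diagonal_conjTranspose, star_trivial, diagonal_mul,
      mul_diagonal, map_apply, Matrix.smul_apply, gram_apply, smul_eq_mul, d, ← exp_add,
      norm_sub_sq_real]
    ring_nf
  rw [h]
  exact ((posSemidef_gram ℝ y).smul (by positivity)).map_exp.mul_mul_conjTranspose_same _

theorem tendsto_gaussianKernelMatrix_atTop [DecidableEq ι] [NormedAddCommGroup E]
    {y : ι → E} (hy : Function.Injective y) :
    Tendsto (gaussianKernelMatrix y) atTop (𝓝 1) := by
  refine tendsto_pi_nhds.mpr fun i => tendsto_pi_nhds.mpr fun j => ?_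
  rcases eq_or_ne i j with rfl | hij
  · simp [gaussianKernelMatrix]
  · have hd : 0 < ‖y i - y j‖ ^ 2 := by
      have := sub_ne_zero.mpr (hy.ne hij)
      positivity
    simpa [gaussianKernelMatrix, one_apply_ne hij] using tendsto_id.atTop_mul_const hd

theorem exists_pos_dotProduct_gaussianKernelMatrix_mulVec [Fintype ι] [NormedAddCommGroup E]
    {y : ι → E} (hy : Function.Injective y) {v : ι → ℝ} (hv : v ≠ 0) :
    ∃ a > 0, 0 < v ⬝ᵥ gaussianKernelMatrix y a *ᵥ v := by
  classical
  have hq : Continuous fun M : Matrix ι ι ℝ => v ⬝ᵥ M *ᵥ v :=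
    continuous_const.dotProduct (continuous_id.matrix_mulVec continuous_const)
  have h := (hq.tendsto 1).comp (tendsto_gaussianKernelMatrix_atTop hy)
  have hpos : 0 < v ⬝ᵥ (1 : Matrix ι ι ℝ) *ᵥ v := by
    simpa [one_mulVec] using dotProduct_star_self_pos_iff.mpr hv
  exact ((h.eventually (lt_mem_nhds hpos)).and (eventually_gt_atTop 0)).exists.imp
    fun a h => ⟨h.2, h.1⟩

theorem continuous_dotProduct_gaussianKernelMatrix_mulVec [Fintype ι] [SeminormedAddCommGroup E]
    (y : ι → E) (v w : ι → ℝ) : Continuous fun a => v ⬝ᵥ gaussianKernelMatrix y a *ᵥ w :=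
  continuous_const.dotProduct
    ((continuous_matrix fun i j => by unfold gaussianKernelMatrix; fun_prop).matrix_mulVec
      continuous_const)

theorem integrableOn_exp_neg_sq_mul_gaussianKernelMatrix [SeminormedAddCommGroup E]
    (y : ι → E) (t : ℝ) (i j : ι) :
    IntegrableOn (fun s => exp (-s ^ 2) * gaussianKernelMatrix y (t ^ 2 / (4 * s ^ 2)) i j)
      (Ioi 0) := by
  have hgauss : Integrable fun s : ℝ => exp (-s ^ 2) := by
    simpa using integrable_exp_neg_mul_sq one_pos
  simp only [gaussianKernelMatrix, of_apply]
  refine hgauss.integrableOn.mono' (by fun_prop) (ae_of_all _ fun s => ?_)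
  rw [norm_mul, norm_of_nonneg (exp_pos _).le, norm_of_nonneg (exp_pos _).le]
  exact mul_le_of_le_one_right (exp_pos _).le (exp_le_one_iff.mpr (neg_nonpos.mpr (by positivity)))

end GaussianKernel

section Subordination

variable {c : ℝ}

theorem hasDerivAt_const_div (c : ℝ) {s : ℝ} (hs : s ≠ 0) :
    HasDerivAt (fun s => c / s) (-(c / s ^ 2)) s := by
  simpa [div_eq_mul_inv, neg_div] using (hasDerivAt_inv hs).const_mul c

theorem hasDerivAt_sub_const_div (c : ℝ) {s : ℝ} (hs : s ≠ 0) :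
    HasDerivAt (fun s => s - c / s) (1 + c / s ^ 2) s := by
  simpa using (hasDerivAt_id' s).fun_sub (hasDerivAt_const_div c hs)

theorem strictMonoOn_sub_const_div (hc : 0 ≤ c) : StrictMonoOn (fun s => s - c / s) (Ioi 0) :=
  fun a ha b _ hab => by
    have := div_le_div_of_nonneg_left hc ha hab.le
    dsimp only
    linarith

theorem image_sub_const_div_Ioi (hc : 0 < c) : (fun s => s - c / s) '' Ioi 0 = univ := by
  refine eq_univ_of_forall fun y => ?_
  -- the positive root of `s ^ 2 - y * s - c`
  set D := √(y ^ 2 + 4 * c)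
  have hD : D ^ 2 = y ^ 2 + 4 * c := sq_sqrt (by positivity)
  have hyD : |y| < D := by
    rw [← sqrt_sq_eq_abs]
    exact sqrt_lt_sqrt (sq_nonneg y) (by linarith)
  have hpos : 0 < y + D := by linarith [neg_abs_le y]
  refine ⟨(y + D) / 2, half_pos hpos, ?_⟩
  field_simp [hpos.ne']
  linear_combination hD

theorem image_const_div_Ioi (hc : 0 < c) : (fun s => c / s) '' Ioi 0 = Ioi 0 := by
  refine (image_subset_iff.mpr fun s hs => div_pos hc hs).antisymm fun y hy => ?_
  exact ⟨c / y, div_pos hc hy, div_div_cancel₀ hc.ne'⟩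

theorem abs_one_add_div_sq_smul_exp (hc : 0 < c) (s : ℝ) :
    |1 + c / s ^ 2| • exp (-(s - c / s) ^ 2) = (1 + c / s ^ 2) * exp (-(s - c / s) ^ 2) := by
  rw [abs_of_pos (by positivity), smul_eq_mul]

theorem integrableOn_one_add_div_sq_mul_exp (hc : 0 < c) :
    IntegrableOn (fun s => (1 + c / s ^ 2) * exp (-(s - c / s) ^ 2)) (Ioi 0) := by
  have hgauss : Integrable fun u : ℝ => exp (-u ^ 2) := by
    simpa using integrable_exp_neg_mul_sq one_pos
  have := (integrableOn_image_iff_integrableOn_abs_deriv_smul measurableSet_Ioi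
    (fun s hs => (hasDerivAt_sub_const_div c (ne_of_gt hs)).hasDerivWithinAt)
    (strictMonoOn_sub_const_div hc.le).injOn fun u => exp (-u ^ 2)).mp
    (by rw [image_sub_const_div_Ioi hc]; exact hgauss.integrableOn)
  exact this.congr_fun (fun s _ => abs_one_add_div_sq_smul_exp hc s) measurableSet_Ioi

theorem integral_one_add_div_sq_mul_exp (hc : 0 < c) :
    ∫ s in Ioi 0, (1 + c / s ^ 2) * exp (-(s - c / s) ^ 2) = √π := by
  have := integral_image_eq_integral_abs_deriv_smul measurableSet_Ioi
    (fun s hs => (hasDerivAt_sub_const_div c (ne_of_gt hs)).hasDerivWithinAt)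
    (strictMonoOn_sub_const_div hc.le).injOn fun u => exp (-u ^ 2)
  rw [image_sub_const_div_Ioi hc, setIntegral_univ] at this
  simp_rw [abs_one_add_div_sq_smul_exp hc] at this
  rw [← this]
  simpa using integral_gaussian 1

theorem integral_div_sq_mul_exp (hc : 0 < c) :
    ∫ s in Ioi 0, c / s ^ 2 * exp (-(s - c / s) ^ 2) = ∫ s in Ioi 0, exp (-(s - c / s) ^ 2) := by
  have := integral_image_eq_integral_abs_deriv_smul measurableSet_Ioi
    (fun s hs => (hasDerivAt_const_div c (ne_of_gt hs)).hasDerivWithinAt)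
    (fun a _ b _ h => by simpa [div_div_cancel₀ hc.ne'] using congrArg (c / ·) h)
    fun v => exp (-(v - c / v) ^ 2)
  rw [image_const_div_Ioi hc] at this
  rw [this]
  refine setIntegral_congr_fun measurableSet_Ioi fun s hs => ?_
  rw [abs_neg, abs_of_pos (div_pos hc (pow_pos hs 2)), div_div_cancel₀ hc.ne', smul_eq_mul]
  ring_nf

/-- The substitution `s ↦ c / s` shows that the two halves of
`∫ (1 + c / s ^ 2) * exp (-(s - c / s) ^ 2) = √π` are equal. -/
theorem integral_exp_neg_sq_sub_div (hc : 0 < c) :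
    ∫ s in Ioi 0, exp (-(s - c / s) ^ 2) = √π / 2 := by
  have hF := integrableOn_one_add_div_sq_mul_exp hc
  have hbound {f : ℝ → ℝ} (hf : Measurable f) (h0 : ∀ s, 0 < s → 0 ≤ f s)
      (h1 : ∀ s, 0 < s → f s ≤ 1 + c / s ^ 2) :
      IntegrableOn (fun s => f s * exp (-(s - c / s) ^ 2)) (Ioi 0) := by
    refine hF.mono' (by fun_prop) ((ae_restrict_mem measurableSet_Ioi).mono fun s hs => ?_)
    rw [norm_mul, norm_of_nonneg (h0 s hs), norm_of_nonneg (exp_pos _).le]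
    exact mul_le_mul_of_nonneg_right (h1 s hs) (exp_pos _).le
  have h1 := hbound measurable_const (fun _ _ => zero_le_one) fun s _ =>
    le_add_of_nonneg_right (by positivity)
  have h2 := hbound (by fun_prop) (fun s _ => by positivity) fun s _ =>
    le_add_of_nonneg_left zero_le_one
  have := integral_one_add_div_sq_mul_exp hc
  simp_rw [add_mul, one_mul] at this
  rw [integral_add (by simpa [IntegrableOn] using h1) h2, integral_div_sq_mul_exp hc] at this
  linarith

theorem integral_exp_neg_sq_mul_exp_neg_sq_div (r : ℝ) (hr : 0 ≤ r) :
    ∫ s in Ioi 0, exp (-s ^ 2) * exp (-(r ^ 2 / (4 * s ^ 2))) = √π / 2 * exp (-r) := by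
  rcases hr.eq_or_lt with rfl | hr
  · simpa using integral_gaussian_Ioi 1
  · have h (s : ℝ) (hs : s ∈ Ioi 0) : exp (-s ^ 2) * exp (-(r ^ 2 / (4 * s ^ 2))) =
        exp (-r) * exp (-(s - r / 2 / s) ^ 2) := by
      rw [← exp_add, ← exp_add]
      congr 1
      field_simp [(mem_Ioi.mp hs).ne']
      ring
    rw [setIntegral_congr_fun measurableSet_Ioi h, integral_const_mul,
      integral_exp_neg_sq_sub_div (half_pos hr), mul_comm]

end Subordination

section Similarity

variable {ι E : Type*}

/-- The matrix `ζ_{tX}` of the paper, for `X = range y`. -/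
noncomputable def similarityMatrix {X : Type*} [PseudoMetricSpace X] (y : ι → X) (t : ℝ) :
    Matrix ι ι ℝ :=
  of fun i j => exp (-(t * dist (y i) (y j)))

theorem similarityMatrix_apply_eq_integral [SeminormedAddCommGroup E] (y : ι → E) {t : ℝ}
    (ht : 0 ≤ t) (i j : ι) :
    similarityMatrix y t i j =
      2 / √π * ∫ s in Ioi 0, exp (-s ^ 2) * gaussianKernelMatrix y (t ^ 2 / (4 * s ^ 2)) i j := by
  have h (s : ℝ) : exp (-s ^ 2) * gaussianKernelMatrix y (t ^ 2 / (4 * s ^ 2)) i j =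
      exp (-s ^ 2) * exp (-((t * dist (y i) (y j)) ^ 2 / (4 * s ^ 2))) := by
    simp only [gaussianKernelMatrix, of_apply, dist_eq_norm]
    ring_nf
  simp_rw [similarityMatrix, of_apply, h,
    integral_exp_neg_sq_mul_exp_neg_sq_div _ (by positivity : 0 ≤ t * dist (y i) (y j))]
  field_simp

theorem posDef_similarityMatrix [Fintype ι] [NormedAddCommGroup E] [InnerProductSpace ℝ E]
    {y : ι → E} (hy : Function.Injective y) {t : ℝ} (ht : 0 < t) :
    (similarityMatrix y t).PosDef := by
  refine .of_dotProduct_mulVec_pos (by ext; simp [similarityMatrix, dist_comm]) fun v hv => ?_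
  let F (s : ℝ) : Matrix ι ι ℝ := exp (-s ^ 2) • gaussianKernelMatrix y (t ^ 2 / (4 * s ^ 2))
  have hF : ∀ i j, IntegrableOn (fun s => F s i j) (Ioi 0) :=
    integrableOn_exp_neg_sq_mul_gaussianKernelMatrix y t
  have hrepr : similarityMatrix y t = (2 / √π) • of fun i j => ∫ s in Ioi 0, F s i j := by
    ext i j
    exact similarityMatrix_apply_eq_integral y ht.le i j
  rw [hrepr, smul_mulVec, dotProduct_smul, dotProduct_mulVec_integral hF]
  refine smul_pos (by positivity) ?_
  obtain ⟨a, ha, hva⟩ := exists_pos_dotProduct_gaussianKernelMatrix_mulVec hy hv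
  refine setIntegral_pos_of_continuousOn isOpen_Ioi ?_ (integrable_dotProduct_mulVec hF _ _)
    (fun s _ => ?_) (x := t / (2 * √a)) (mem_Ioi.mpr (by positivity)) ?_
  · simp only [F, smul_mulVec, dotProduct_smul, smul_eq_mul]
    refine (continuous_exp.comp (continuous_pow 2).neg).continuousOn.mul
      ((continuous_dotProduct_gaussianKernelMatrix_mulVec y _ v).comp_continuousOn ?_)
    exact continuousOn_const.div (by fun_prop) fun s hs => by have : 0 < s := hs; positivity
  · simp only [F, smul_mulVec, dotProduct_smul, smul_eq_mul]
    exact mul_nonneg (exp_pos _).le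
      ((posSemidef_gaussianKernelMatrix y (by positivity)).dotProduct_mulVec_nonneg v)
  · have h : t ^ 2 / (4 * (t / (2 * √a)) ^ 2) = a := by
      field_simp
      rw [sq_sqrt ha.le]
      ring
    simp only [F, smul_mulVec, dotProduct_smul, smul_eq_mul, h, star_trivial]
    exact (mul_pos (exp_pos _) hva).ne'

end Similarity

section Analytic

variable {𝕜 : Type*} [NontriviallyNormedField 𝕜] {n : Type*} [Fintype n] [DecidableEq n]
  {M : 𝕜 → Matrix n n 𝕜} {x : 𝕜}

theorem AnalyticAt.matrix_det (hM : ∀ i j, AnalyticAt 𝕜 (fun t => M t i j) x) :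
    AnalyticAt 𝕜 (fun t => (M t).det) x := by
  simp only [det_apply']
  exact Finset.analyticAt_fun_sum _ fun σ _ =>
    analyticAt_const.mul (Finset.analyticAt_fun_prod _ fun i _ => hM (σ i) i)

theorem AnalyticAt.matrix_adjugate (hM : ∀ i j, AnalyticAt 𝕜 (fun t => M t i j) x) (i j : n) :
    AnalyticAt 𝕜 (fun t => (M t).adjugate i j) x := by
  simp only [adjugate_apply]
  refine AnalyticAt.matrix_det fun k l => ?_
  rcases eq_or_ne k j with rfl | hk
  · simpa using analyticAt_const
  · simpa [hk] using hM k l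

theorem AnalyticAt.matrix_inv (hM : ∀ i j, AnalyticAt 𝕜 (fun t => M t i j) x)
    (hdet : (M x).det ≠ 0) (i j : n) : AnalyticAt 𝕜 (fun t => (M t)⁻¹ i j) x := by
  simp only [inv_def, Matrix.smul_apply, Ring.inverse_eq_inv', smul_eq_mul]
  exact ((AnalyticAt.matrix_det hM).inv hdet).mul (AnalyticAt.matrix_adjugate hM i j)

theorem AnalyticAt.dotProduct_matrix_inv_mulVec (hM : ∀ i j, AnalyticAt 𝕜 (fun t => M t i j) x)
    (hdet : (M x).det ≠ 0) (v w : n → 𝕜) : AnalyticAt 𝕜 (fun t => v ⬝ᵥ (M t)⁻¹ *ᵥ w) x := by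
  simp only [dotProduct, mulVec]
  exact Finset.analyticAt_fun_sum _ fun i _ => analyticAt_const.mul <|
    Finset.analyticAt_fun_sum _ fun j _ => (AnalyticAt.matrix_inv hM hdet i j).mul analyticAt_const

end Analytic

/-- The magnitude function of a finite subset of Euclidean space is real
analytic on `(0, ∞)`; in particular, for every `t > 0` the scaled similarity matrix
`ζ_{tX} (i,j) = exp (-t ‖x i - x j‖)` is positive definite (hence invertible), and
`t ↦ Mag (tX)` is continuous on `(0, ∞)`. -/
theorem magnitude_function_analytic (n m : ℕ) (x : Fin m → EuclideanSpace ℝ (Fin n))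
    (hx : Function.Injective x) :
    (∀ t : ℝ, 0 < t →
      (Matrix.of fun i j => Real.exp (-(t * dist (x i) (x j)))).PosDef) ∧
    AnalyticOnNhd ℝ
      (fun t : ℝ => (fun _ => (1 : ℝ)) ⬝ᵥ
        ((Matrix.of fun i j => Real.exp (-(t * dist (x i) (x j))))⁻¹ *ᵥ fun _ => (1 : ℝ)))
      (Set.Ioi 0) ∧
    ContinuousOn
      (fun t : ℝ => (fun _ => (1 : ℝ)) ⬝ᵥ
        ((Matrix.of fun i j => Real.exp (-(t * dist (x i) (x j))))⁻¹ *ᵥ fun _ => (1 : ℝ)))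
      (Set.Ioi 0) := by
  have hpos (t : ℝ) (ht : 0 < t) : (similarityMatrix x t).PosDef := posDef_similarityMatrix hx ht
  have hmag : AnalyticOnNhd ℝ
      (fun t => (fun _ => (1 : ℝ)) ⬝ᵥ (similarityMatrix x t)⁻¹ *ᵥ fun _ => (1 : ℝ)) (Ioi 0) :=
    fun t ht => AnalyticAt.dotProduct_matrix_inv_mulVec
      (fun i j => by simp only [similarityMatrix, of_apply]; fun_prop) (hpos t ht).det_pos.ne' _ _
  exact ⟨hpos, hmag, hmag.continuousOn⟩
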